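/- The family CF_cb of capacity-bounded context-free languages is closed under homomorphisms: if L ∈ CF_cb and h : Σ* → Δ* is a monoid homomorphism, then h(L) ∈ CF_cb. -/

import Mathlib

/-! Common definitions: symbols, context-free grammars, Ginsburg–Spanier phrase
structure grammars, capacity-bounded derivations, matrix/vector grammars,
finite index, cf Petri nets with place capacities, and language families. -/

inductive Symb (N T : Type) where
  | nt : N → Symb N T
  | tm : T → Symb N T
deriving DecidableEq

namespace CapGram

variable {N T Δ α : Type}

open Classical in
/-- Number of occurrences of the nonterminal `A` in a sentential form. -/
noncomputable def symCount (A : N) : List (Symb N T) → ℕ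
  | [] => 0
  | Symb.nt B :: r => (if B = A then 1 else 0) + symCount A r
  | Symb.tm _ :: r => symCount A r

/-- Total number of nonterminal occurrences in a sentential form. -/
def ntCount : List (Symb N T) → ℕ
  | [] => 0
  | Symb.nt _ :: r => 1 + ntCount r
  | Symb.tm _ :: r => ntCount r

/-- The sentential form `w` respects the capacity function `κ`. -/
def CapOK (κ : N → ℕ) (w : List (Symb N T)) : Prop :=
  ∀ A : N, symCount A w ≤ κ A

/-- A context-free grammar (rules are pairs of a nonterminal and a word). -/
structure CFG (N T : Type) where
  start : N
  rules : Finset (N × List (Symb N T))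

/-- Application of a single context-free rule. -/
def applyRule (r : N × List (Symb N T)) (u v : List (Symb N T)) : Prop :=
  ∃ x y : List (Symb N T), u = x ++ Symb.nt r.1 :: y ∧ v = x ++ r.2 ++ y

def CFG.Step (G : CFG N T) (u v : List (Symb N T)) : Prop :=
  ∃ r ∈ G.rules, applyRule r u v

/-- A derivation step both of whose sentential forms respect the capacity. -/
def CFG.CapStep (G : CFG N T) (κ : N → ℕ) (u v : List (Symb N T)) : Prop :=
  G.Step u v ∧ CapOK κ u ∧ CapOK κ v

/-- A derivation step both of whose sentential forms have at most `k`
nonterminal occurrences in total. -/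
def CFG.IdxStep (G : CFG N T) (k : ℕ) (u v : List (Symb N T)) : Prop :=
  G.Step u v ∧ ntCount u ≤ k ∧ ntCount v ≤ k

/-- The (unrestricted) language of a context-free grammar. -/
def CFG.Lang (G : CFG N T) : Set (List T) :=
  { w | Relation.ReflTransGen G.Step [Symb.nt G.start] (w.map Symb.tm) }

/-- The language of the capacity-bounded grammar `(G, κ)`. -/
def CFG.CapLang (G : CFG N T) (κ : N → ℕ) : Set (List T) :=
  { w | Relation.ReflTransGen (G.CapStep κ) [Symb.nt G.start] (w.map Symb.tm) }

/-- Words with a derivation of index at most `k`. -/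
def CFG.FinLang (G : CFG N T) (k : ℕ) : Set (List T) :=
  { w | Relation.ReflTransGen (G.IdxStep k) [Symb.nt G.start] (w.map Symb.tm) }

/-- A phrase structure grammar due to Ginsburg and Spanier: the left-hand side
of a rule is a nonempty word of nonterminals, encoded as head and tail. -/
structure GSG (N T : Type) where
  start : N
  rules : Finset ((N × List N) × List (Symb N T))

def GSG.Step (G : GSG N T) (u v : List (Symb N T)) : Prop :=
  ∃ r ∈ G.rules, ∃ x y : List (Symb N T),
    u = x ++ (r.1.1 :: r.1.2).map Symb.nt ++ y ∧ v = x ++ r.2 ++ y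

def GSG.CapStep (G : GSG N T) (κ : N → ℕ) (u v : List (Symb N T)) : Prop :=
  G.Step u v ∧ CapOK κ u ∧ CapOK κ v

def GSG.Lang (G : GSG N T) : Set (List T) :=
  { w | Relation.ReflTransGen G.Step [Symb.nt G.start] (w.map Symb.tm) }

def GSG.CapLang (G : GSG N T) (κ : N → ℕ) : Set (List T) :=
  { w | Relation.ReflTransGen (G.CapStep κ) [Symb.nt G.start] (w.map Symb.tm) }

/-- Derivations labeled by their sequence of context-free rules, where every
sentential form (including the first and last) satisfies the invariant `P`. -/
inductive DerivP (P : List (Symb N T) → Prop) :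
    List (N × List (Symb N T)) → List (Symb N T) → List (Symb N T) → Prop
  | nil (u : List (Symb N T)) : P u → DerivP P [] u u
  | cons {r π u v w} : P u → applyRule r u v → DerivP P π v w →
      DerivP P (r :: π) u w

/-- A matrix grammar: a finite set of matrices (sequences of cf rules). -/
structure MG (N T : Type) where
  start : N
  mats : Finset (List (N × List (Symb N T)))

/-- Matrix language: rule sequences are concatenations of matrices. -/
def MG.Lang (G : MG N T) : Set (List T) :=
  { w | ∃ ms : List (List (N × List (Symb N T))),
      (∀ m ∈ ms, m ∈ G.mats) ∧
      DerivP (fun _ => True) ms.flatten [Symb.nt G.start] (w.map Symb.tm) }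

/-- Words with a matrix derivation of index at most `k`. -/
def MG.FinLang (G : MG N T) (k : ℕ) : Set (List T) :=
  { w | ∃ ms : List (List (N × List (Symb N T))),
      (∀ m ∈ ms, m ∈ G.mats) ∧
      DerivP (fun u => ntCount u ≤ k) ms.flatten [Symb.nt G.start] (w.map Symb.tm) }

/-- `Shuffle ms π`: `π` is an interleaving (shuffle) of the lists in `ms`. -/
inductive Shuffle : List (List α) → List α → Prop
  | nil (ms : List (List α)) : (∀ l ∈ ms, l = []) → Shuffle ms []
  | cons {ms₁ : List (List α)} {l : List α} {ms₂ : List (List α)} {π : List α}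
      (a : α) : Shuffle (ms₁ ++ l :: ms₂) π →
      Shuffle (ms₁ ++ (a :: l) :: ms₂) (a :: π)

/-- A vector grammar: like a matrix grammar, but derivations use shuffles. -/
structure VG (N T : Type) where
  start : N
  mats : Finset (List (N × List (Symb N T)))

def VG.Lang (G : VG N T) : Set (List T) :=
  { w | ∃ ms π, (∀ m ∈ ms, m ∈ G.mats) ∧ Shuffle ms π ∧
      DerivP (fun _ => True) π [Symb.nt G.start] (w.map Symb.tm) }

def VG.CapLang (G : VG N T) (κ : N → ℕ) : Set (List T) :=
  { w | ∃ ms π, (∀ m ∈ ms, m ∈ G.mats) ∧ Shuffle ms π ∧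
      DerivP (CapOK κ) π [Symb.nt G.start] (w.map Symb.tm) }

def VG.FinLang (G : VG N T) (k : ℕ) : Set (List T) :=
  { w | ∃ ms π, (∀ m ∈ ms, m ∈ G.mats) ∧ Shuffle ms π ∧
      DerivP (fun u => ntCount u ≤ k) π [Symb.nt G.start] (w.map Symb.tm) }

/-! cf Petri nets: places are in bijection with the nonterminals, transitions
with the rules; firing the transition of rule `A → α` consumes one token from
the place of `A` and adds `|α|_X` tokens to the place of each nonterminal `X`. -/

open Classical in
/-- Firing of the transition corresponding to rule `r`, turning marking `μ`
into marking `μ'`. -/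
noncomputable def ruleFire (r : N × List (Symb N T)) (μ μ' : N → ℕ) : Prop :=
  1 ≤ μ r.1 ∧ ∀ A, μ' A = μ A - (if A = r.1 then 1 else 0) + symCount A r.2

/-- Occurrence sequences of the cf Petri net of `G`, all of whose markings
(including initial and final) satisfy the validity predicate `P`. -/
inductive FireSeqP (G : CFG N T) (P : (N → ℕ) → Prop) :
    List (N × List (Symb N T)) → (N → ℕ) → (N → ℕ) → Prop
  | nil (μ : N → ℕ) : P μ → FireSeqP G P [] μ μ
  | cons {r π μ μ' μ''} : r ∈ G.rules → P μ → ruleFire r μ μ' →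
      FireSeqP G P π μ' μ'' → FireSeqP G P (r :: π) μ μ''

open Classical in
/-- The initial marking: one token on the place of the start symbol. -/
noncomputable def initMark (G : CFG N T) : N → ℕ :=
  fun A => if A = G.start then 1 else 0

/-- The language of `G` controlled by its cf Petri net restricted to markings
satisfying `P` (e.g. a place capacity constraint). -/
def CFG.PNLang (G : CFG N T) (P : (N → ℕ) → Prop) : Set (List T) :=
  { w | ∃ π μ, DerivP (fun _ => True) π [Symb.nt G.start] (w.map Symb.tm) ∧
      FireSeqP G P π (initMark G) μ }

/-! Language families over a terminal alphabet `T`. -/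

/-- Context-free languages of finite index. -/
def CFfin (T : Type) : Set (Set (List T)) :=
  { L | ∃ (N : Type) (_ : Fintype N) (G : CFG N T) (k : ℕ),
      L = G.Lang ∧ G.Lang ⊆ G.FinLang k }

/-- Languages of capacity-bounded context-free grammars. -/
def CFcb (T : Type) : Set (Set (List T)) :=
  { L | ∃ (N : Type) (_ : Fintype N) (G : CFG N T) (κ : N → ℕ),
      L = G.CapLang κ }

/-- Languages of capacity-bounded Ginsburg–Spanier phrase structure grammars. -/
def GScb (T : Type) : Set (Set (List T)) :=
  { L | ∃ (N : Type) (_ : Fintype N) (G : GSG N T) (κ : N → ℕ),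
      L = G.CapLang κ }

/-- Matrix languages of finite index. -/
def MATfin (T : Type) : Set (Set (List T)) :=
  { L | ∃ (N : Type) (_ : Fintype N) (G : MG N T) (k : ℕ),
      L = G.Lang ∧ G.Lang ⊆ G.FinLang k }

/-- Capacity-bounded vector languages (erasing rules allowed). -/
def Vcb (T : Type) : Set (Set (List T)) :=
  { L | ∃ (N : Type) (_ : Fintype N) (G : VG N T) (κ : N → ℕ),
      L = G.CapLang κ }

/-- Vector languages of finite index (erasing rules allowed). -/
def Vfin (T : Type) : Set (Set (List T)) :=
  { L | ∃ (N : Type) (_ : Fintype N) (G : VG N T) (k : ℕ),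
      L = G.Lang ∧ G.Lang ⊆ G.FinLang k }

/-- Languages of grammars controlled by cf Petri nets with place capacities. -/
def PNcap (T : Type) : Set (Set (List T)) :=
  { L | ∃ (N : Type) (_ : Fintype N) (G : CFG N T) (κ : N → ℕ),
      L = G.PNLang (fun μ => ∀ A, μ A ≤ κ A) }


/-- The homomorphism determined by its images `h` of single letters. -/
def homExt (h : T → List Δ) (w : List T) : List Δ := (w.map h).flatten

/-- Map a symbol over `T` to a word over `Δ`, using `h` on terminals. -/
def mapS (h : T → List Δ) : Symb N T → List (Symb N Δ)
  | Symb.nt A => [Symb.nt A]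
  | Symb.tm t => (h t).map Symb.tm

/-- Map a sentential form over `T` to one over `Δ`. -/
def mapW (h : T → List Δ) (u : List (Symb N T)) : List (Symb N Δ) :=
  u.flatMap (mapS h)

lemma mapW_nil (h : T → List Δ) : mapW h ([] : List (Symb N T)) = [] := rfl

lemma mapW_cons (h : T → List Δ) (a : Symb N T) (u : List (Symb N T)) :
    mapW h (a :: u) = mapS h a ++ mapW h u := rfl

lemma mapW_append (h : T → List Δ) (u v : List (Symb N T)) :
    mapW h (u ++ v) = mapW h u ++ mapW h v := by
  simp [mapW]

lemma mapW_map_tm (h : T → List Δ) (w : List T) :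
    mapW h (w.map (Symb.tm : T → Symb N T)) = (homExt h w).map Symb.tm := by
  induction w with
  | nil => rfl
  | cons t w ih =>
      rw [List.map_cons, mapW_cons, ih]
      simp [mapS, homExt]

lemma symCount_append (A : N) (u v : List (Symb N T)) :
    symCount A (u ++ v) = symCount A u + symCount A v := by
  induction u with
  | nil => simp [symCount]
  | cons a u ih => cases a <;> simp [symCount, ih] <;> omega

lemma symCount_map_tm (A : N) (l : List Δ) :
    symCount A (l.map (Symb.tm : Δ → Symb N Δ)) = 0 := by
  induction l with
  | nil => rfl
  | cons t l ih => simpa [symCount] using ih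

lemma symCount_mapW (h : T → List Δ) (A : N) (u : List (Symb N T)) :
    symCount A (mapW h u) = symCount A u := by
  induction u with
  | nil => rfl
  | cons a u ih =>
      rw [mapW_cons]
      cases a with
      | nt B => simp [mapS, symCount_append, symCount, ih]
      | tm t => simp [mapS, symCount_append, symCount, symCount_map_tm, ih]

lemma capOK_mapW (h : T → List Δ) (κ : N → ℕ) (u : List (Symb N T)) :
    CapOK κ (mapW h u) ↔ CapOK κ u := by
  unfold CapOK; simp [symCount_mapW]

open Classical in
/-- The homomorphic image grammar. -/
noncomputable def hCFG (G : CFG N T) (h : T → List Δ) : CFG N Δ where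
  start := G.start
  rules := G.rules.image fun r => (r.1, mapW h r.2)

lemma hCFG_start (G : CFG N T) (h : T → List Δ) : (hCFG G h).start = G.start :=
  rfl

lemma mem_hCFG_rules (G : CFG N T) (h : T → List Δ)
    (r' : N × List (Symb N Δ)) :
    r' ∈ (hCFG G h).rules ↔ ∃ r ∈ G.rules, (r.1, mapW h r.2) = r' := by
  simp [hCFG]

/-- Splitting a prefix of terminals off an occurrence of a nonterminal. -/
lemma tm_prefix_split (A : N) (l : List Δ) (m x' y' : List (Symb N Δ))
    (hE : l.map Symb.tm ++ m = x' ++ Symb.nt A :: y') :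
    ∃ x'', x' = l.map Symb.tm ++ x'' ∧ m = x'' ++ Symb.nt A :: y' := by
  induction l generalizing x' with
  | nil => exact ⟨x', by simp, by simpa using hE⟩
  | cons t l ih =>
      cases x' with
      | nil => simp at hE
      | cons s x' =>
          simp only [List.map_cons, List.cons_append, List.cons.injEq] at hE
          obtain ⟨rfl, hE⟩ := hE
          obtain ⟨x'', h1, h2⟩ := ih x' hE
          exact ⟨x'', by simp [h1], h2⟩

/-- Decomposition of a mapped word at a nonterminal occurrence. -/
lemma mapW_split (h : T → List Δ) (A : N) :
    ∀ (u : List (Symb N T)) (x' y' : List (Symb N Δ)),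
      mapW h u = x' ++ Symb.nt A :: y' →
      ∃ x y, u = x ++ Symb.nt A :: y ∧ mapW h x = x' ∧ mapW h y = y' := by
  intro u
  induction u with
  | nil => intro x' y' hE; simp [mapW_nil] at hE
  | cons a u ih =>
      intro x' y' hE
      cases a with
      | nt B =>
          rw [mapW_cons] at hE
          cases x' with
          | nil =>
              simp only [mapS, List.nil_append, List.singleton_append,
                List.cons.injEq, Symb.nt.injEq] at hE
              obtain ⟨rfl, rfl⟩ := hE
              exact ⟨[], u, rfl, rfl, rfl⟩
          | cons s x' =>
              simp only [mapS, List.singleton_append, List.cons_append,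
                List.cons.injEq] at hE
              obtain ⟨rfl, hE⟩ := hE
              obtain ⟨x, y, rfl, rfl, rfl⟩ := ih x' y' hE
              exact ⟨Symb.nt B :: x, y, rfl, rfl, rfl⟩
      | tm t =>
          rw [mapW_cons, show mapS h (Symb.tm t) = (h t).map Symb.tm from rfl]
            at hE
          obtain ⟨x'', rfl, hE2⟩ := tm_prefix_split A (h t) (mapW h u) _ _ hE
          obtain ⟨x, y, rfl, rfl, rfl⟩ := ih x'' y' hE2
          exact ⟨Symb.tm t :: x, y, rfl, by rw [mapW_cons]; rfl, rfl⟩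

lemma step_forward (G : CFG N T) (h : T → List Δ) {u v : List (Symb N T)}
    (hs : G.Step u v) : (hCFG G h).Step (mapW h u) (mapW h v) := by
  obtain ⟨r, hr, x, y, rfl, rfl⟩ := hs
  refine ⟨(r.1, mapW h r.2), (mem_hCFG_rules G h _).mpr ⟨r, hr, rfl⟩,
    mapW h x, mapW h y, ?_, ?_⟩
  · simp [mapW_append, mapW_cons, mapS]
  · simp [mapW_append]

lemma step_backward (G : CFG N T) (h : T → List Δ) {u : List (Symb N T)}
    {v' : List (Symb N Δ)} (hs : (hCFG G h).Step (mapW h u) v') :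
    ∃ v, v' = mapW h v ∧ G.Step u v := by
  obtain ⟨r', hr', x', y', hu, rfl⟩ := hs
  obtain ⟨r, hr, hrr⟩ := (mem_hCFG_rules G h r').mp hr'
  obtain ⟨x, y, rfl, hx, hy⟩ := mapW_split h r'.1 u x' y' hu
  refine ⟨x ++ r.2 ++ y, ?_, ⟨r, hr, x, y, ?_, rfl⟩⟩
  · rw [mapW_append, mapW_append, hx, hy]
    have : r'.2 = mapW h r.2 := by rw [← hrr]
    rw [this]
  · have : r.1 = r'.1 := by rw [← hrr]
    rw [this]

lemma mapW_tm_inv (h : T → List Δ) (u : List (Symb N T))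
    (hnt : ∀ A : N, Symb.nt A ∉ mapW h u) :
    ∃ w : List T, u = w.map Symb.tm := by
  induction u with
  | nil => exact ⟨[], rfl⟩
  | cons a u ih =>
      cases a with
      | nt B => exact absurd (by simp [mapW_cons, mapS]) (hnt B)
      | tm t =>
          obtain ⟨w, rfl⟩ := ih fun A hA =>
            hnt A (by rw [mapW_cons]; exact List.mem_append_right _ hA)
          exact ⟨t :: w, rfl⟩

/-- CF_cb is closed under homomorphisms. -/
theorem CFcb_closed_hom (T Δ : Type) (L : Set (List T)) (hL : L ∈ CFcb T)
    (h : T → List Δ) : homExt h '' L ∈ CFcb Δ := by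
  obtain ⟨N, ft, G, κ, rfl⟩ := hL
  refine ⟨N, ft, hCFG G h, κ, Set.ext fun z => ?_⟩
  constructor
  · rintro ⟨w, hw, rfl⟩
    have : Relation.ReflTransGen ((hCFG G h).CapStep κ)
        (mapW h [Symb.nt G.start]) (mapW h (w.map Symb.tm)) := by
      refine Relation.ReflTransGen.lift (mapW h) ?_ _ _ hw
      rintro u v ⟨hs, hu, hv⟩
      exact ⟨step_forward G h hs, (capOK_mapW h κ u).mpr hu,
        (capOK_mapW h κ v).mpr hv⟩
    rw [mapW_map_tm] at this
    exact this
  · intro hz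
    have back : ∀ {a b : List (Symb N Δ)},
        Relation.ReflTransGen ((hCFG G h).CapStep κ) a b →
        ∀ u : List (Symb N T), a = mapW h u →
        ∃ v, b = mapW h v ∧ Relation.ReflTransGen (G.CapStep κ) u v := by
      intro a b hab
      induction hab using Relation.ReflTransGen.head_induction_on with
      | refl => exact fun u hu => ⟨u, hu, Relation.ReflTransGen.refl⟩
      | head hst _ ih =>
          rintro u rfl
          obtain ⟨hs, hcu, hcc⟩ := hst
          obtain ⟨v₁, rfl, hsv⟩ := step_backward G h hs
          obtain ⟨v, rfl, hvv⟩ := ih v₁ rfl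
          exact ⟨v, rfl, Relation.ReflTransGen.head
            ⟨hsv, (capOK_mapW h κ u).mp hcu, (capOK_mapW h κ v₁).mp hcc⟩ hvv⟩
    obtain ⟨v, hv, hder⟩ := back hz [Symb.nt G.start]
      rfl
    obtain ⟨w, rfl⟩ := mapW_tm_inv h v fun A hA => by
      rw [← hv] at hA
      obtain ⟨t, _, ht⟩ := List.mem_map.mp hA
      exact nomatch ht
    refine ⟨w, hder, ?_⟩
    rw [mapW_map_tm] at hv
    exact (List.map_injective_iff.mpr (fun a b => Symb.tm.inj) hv).symm

end CapGram
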